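/- arXiv:1901.06732 — 6 statements merged into one kernel-verified Lean document; each statement's English description precedes it below -/
import Mathlib

section
/- Fix a real number V with 0 < V < 1 and set c = 2V/(1-V). Then the function f : ℝ → ℝ defined by f(x) = x + 1 + c(1+x) − √((1 + c(1+x))·(2x + 1 + c(1+x))) is strictly increasing on the interval (0, ∞). -/
set_option maxHeartbeats 1000000 in
/-- Fix `V` with `0 < V < 1` and set `c = 2V/(1-V)`. The function
`f(x) = x + 1 + c(1+x) − √((1 + c(1+x))·(2x + 1 + c(1+x)))` is strictly increasing
on `(0, ∞)`. -/
theorem stmt_0 (V : ℝ) (hV0 : 0 < V) (hV1 : V < 1) :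
    StrictMonoOn
      (fun x : ℝ =>
        x + 1 + (2 * V / (1 - V)) * (1 + x) -
          Real.sqrt ((1 + (2 * V / (1 - V)) * (1 + x)) *
            (2 * x + 1 + (2 * V / (1 - V)) * (1 + x))))
      (Set.Ioi (0 : ℝ)) := by
  intro a ha b hb hab
  simp only [Set.mem_Ioi] at ha hb
  set c := 2 * V / (1 - V) with hc_def
  have hc : 0 < c := div_pos (by linarith) (by linarith)
  have key : ∀ x : ℝ, 0 < x →
      x + 1 + c * (1 + x) -
        Real.sqrt ((1 + c * (1 + x)) * (2 * x + 1 + c * (1 + x)))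
        = x ^ 2 / (1 + c * (1 + x) + x +
            Real.sqrt ((1 + c * (1 + x)) * (2 * x + 1 + c * (1 + x)))) := by
    intro x hx
    have hApos : 0 < 1 + c * (1 + x) := by nlinarith
    have hBpos : 0 < 2 * x + 1 + c * (1 + x) := by nlinarith
    set S := Real.sqrt ((1 + c * (1 + x)) * (2 * x + 1 + c * (1 + x))) with hS
    have hS2 : S ^ 2 = (1 + c * (1 + x)) * (2 * x + 1 + c * (1 + x)) :=
      Real.sq_sqrt (by positivity)
    have hSnn : 0 ≤ S := Real.sqrt_nonneg _
    have hD : 0 < 1 + c * (1 + x) + x + S := by linarith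
    field_simp
    nlinarith [hS2]
  show (fun x : ℝ =>
        x + 1 + c * (1 + x) -
          Real.sqrt ((1 + c * (1 + x)) * (2 * x + 1 + c * (1 + x)))) a <
      (fun x : ℝ =>
        x + 1 + c * (1 + x) -
          Real.sqrt ((1 + c * (1 + x)) * (2 * x + 1 + c * (1 + x)))) b
  simp only
  rw [key a ha, key b hb]
  have hAa : (0:ℝ) < 1 + c * (1 + a) := by nlinarith
  have hBa : (0:ℝ) < 2 * a + 1 + c * (1 + a) := by nlinarith
  have hAb : (0:ℝ) < 1 + c * (1 + b) := by nlinarith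
  have hBb : (0:ℝ) < 2 * b + 1 + c * (1 + b) := by nlinarith
  set Sa := Real.sqrt ((1 + c * (1 + a)) * (2 * a + 1 + c * (1 + a))) with hSa
  set Sb := Real.sqrt ((1 + c * (1 + b)) * (2 * b + 1 + c * (1 + b))) with hSb
  have hSa2 : Sa ^ 2 = (1 + c * (1 + a)) * (2 * a + 1 + c * (1 + a)) :=
    Real.sq_sqrt (by positivity)
  have hSb2 : Sb ^ 2 = (1 + c * (1 + b)) * (2 * b + 1 + c * (1 + b)) :=
    Real.sq_sqrt (by positivity)
  have hSann : 0 ≤ Sa := Real.sqrt_nonneg _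
  have hSbnn : 0 ≤ Sb := Real.sqrt_nonneg _
  have hDa : 0 < 1 + c * (1 + a) + a + Sa := by linarith
  have hDb : 0 < 1 + c * (1 + b) + b + Sb := by linarith
  rw [div_lt_div_iff₀ hDa hDb]
  -- compare the sqrt parts
  have hab2 : a ^ 2 ≤ b ^ 2 := by nlinarith
  have t1 : 0 ≤ c * (b ^ 2 - a ^ 2) := mul_nonneg hc.le (by linarith)
  have t2 : 0 ≤ c * (a * b) * (b - a) :=
    mul_nonneg (mul_nonneg hc.le (mul_pos ha hb).le) (by linarith)
  have t3 : 0 < a * b * (b - a) :=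
    mul_pos (mul_pos ha hb) (by linarith)
  have h1 : a ^ 2 * (1 + c * (1 + b)) ≤ b ^ 2 * (1 + c * (1 + a)) := by
    nlinarith [t1, t2, hab2]
  have h2 : a ^ 2 * (2 * b + 1 + c * (1 + b)) ≤ b ^ 2 * (2 * a + 1 + c * (1 + a)) := by
    nlinarith [t1, t2, t3, hab2]
  have hsq : (a ^ 2 * Sb) ^ 2 ≤ (b ^ 2 * Sa) ^ 2 := by
    have hmul := mul_le_mul h1 h2 (by positivity) (by positivity)
    have e1 : (a ^ 2 * Sb) ^ 2
        = a ^ 2 * (1 + c * (1 + b)) * (a ^ 2 * (2 * b + 1 + c * (1 + b))) := by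
      rw [mul_pow, hSb2]; ring
    have e2 : (b ^ 2 * Sa) ^ 2
        = b ^ 2 * (1 + c * (1 + a)) * (b ^ 2 * (2 * a + 1 + c * (1 + a))) := by
      rw [mul_pow, hSa2]; ring
    rw [e1, e2]; exact hmul
  have hcross : a ^ 2 * Sb ≤ b ^ 2 * Sa :=
    le_of_pow_le_pow_left₀ two_ne_zero (by positivity) hsq
  nlinarith [hcross, h1, t3]
end

section
/- Let c ≥ 0 and q > 0 be real numbers, and set x* = q(1+c) + √(q²(c² + 2c) + 2q(1+c)). Then f_c(x*) = q, and for every real x with x ≥ x* one has f_c(x) ≥ q. -/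
/-- For `c ≥ 0`, `q > 0`, and `x* = q(1+c) + √(q²(c²+2c) + 2q(1+c))`, the exponent
function `f_c(x) = x + 1 + c(1+x) − √((1 + c(1+x))·(2x + 1 + c(1+x)))` satisfies
`f_c(x*) = q`, and `f_c(x) ≥ q` for all `x ≥ x*`. -/
theorem stmt_1 (c q : ℝ) (hc : 0 ≤ c) (hq : 0 < q) :
    (fun x : ℝ =>
        x + 1 + c * (1 + x) -
          Real.sqrt ((1 + c * (1 + x)) * (2 * x + 1 + c * (1 + x))))
        (q * (1 + c) + Real.sqrt (q ^ 2 * (c ^ 2 + 2 * c) + 2 * q * (1 + c))) = q ∧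
    ∀ x : ℝ, q * (1 + c) + Real.sqrt (q ^ 2 * (c ^ 2 + 2 * c) + 2 * q * (1 + c)) ≤ x →
      q ≤ x + 1 + c * (1 + x) -
          Real.sqrt ((1 + c * (1 + x)) * (2 * x + 1 + c * (1 + x))) := by
  have hD : (0:ℝ) ≤ q ^ 2 * (c ^ 2 + 2 * c) + 2 * q * (1 + c) := by positivity
  set s := Real.sqrt (q ^ 2 * (c ^ 2 + 2 * c) + 2 * q * (1 + c)) with hs
  have hsnn : 0 ≤ s := Real.sqrt_nonneg _
  have hs2 : s ^ 2 = q ^ 2 * (c ^ 2 + 2 * c) + 2 * q * (1 + c) := Real.sq_sqrt hD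
  constructor
  · simp only
    set x := q * (1 + c) + s with hx
    have hxq : q ≤ x := by nlinarith
    have hnn : 0 ≤ x + 1 + c * (1 + x) - q := by nlinarith
    have hE : (1 + c * (1 + x)) * (2 * x + 1 + c * (1 + x))
        = (x + 1 + c * (1 + x) - q) ^ 2 := by
      have : (x - q * (1 + c)) ^ 2 = s ^ 2 := by rw [hx]; ring
      nlinarith [this, hs2]
    rw [hE, Real.sqrt_sq hnn]; ring
  · intro x hxs
    have hxq : q ≤ x := by nlinarith
    have hnn : 0 ≤ x + 1 + c * (1 + x) - q := by nlinarith
    have hxnn : 0 ≤ x := by nlinarith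
    have hle : (1 + c * (1 + x)) * (2 * x + 1 + c * (1 + x))
        ≤ (x + 1 + c * (1 + x) - q) ^ 2 := by
      have h1 : s ^ 2 ≤ (x - q * (1 + c)) ^ 2 := by nlinarith
      nlinarith [h1, hs2]
    have := Real.sqrt_le_sqrt hle
    rw [Real.sqrt_sq hnn] at this
    linarith
end

section
/- Let a, b ≥ 1 be integers and let x ∈ [0,1]. Then the CDF of the Beta(a,b) distribution satisfies ( (a+b−1)! / ((a−1)!·(b−1)!) ) · ∫₀ˣ w^{a−1}·(1−w)^{b−1} dw ≤ C(a+b−1, b−1) · xᵃ, where C(n,k) denotes the binomial coefficient. -/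
/-- For integers `a, b ≥ 1` and `x ∈ [0,1]`, the Beta(a,b) CDF satisfies
`((a+b−1)!/((a−1)!(b−1)!))·∫₀ˣ w^{a−1}(1−w)^{b−1} dw ≤ C(a+b−1, b−1)·xᵃ`. -/
theorem stmt_8 (a b : ℕ) (ha : 1 ≤ a) (hb : 1 ≤ b) (x : ℝ)
    (hx : x ∈ Set.Icc (0 : ℝ) 1) :
    ((a + b - 1).factorial : ℝ) / (((a - 1).factorial : ℝ) * ((b - 1).factorial : ℝ)) *
        ∫ w in (0 : ℝ)..x, w ^ (a - 1) * (1 - w) ^ (b - 1) ≤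
      ((a + b - 1).choose (b - 1) : ℝ) * x ^ a := by
  obtain ⟨a', rfl⟩ : ∃ a', a = a' + 1 := ⟨a - 1, (Nat.succ_pred_eq_of_pos ha).symm⟩
  obtain ⟨b', rfl⟩ : ∃ b', b = b' + 1 := ⟨b - 1, (Nat.succ_pred_eq_of_pos hb).symm⟩
  obtain ⟨hx0, hx1⟩ := hx
  simp only [Nat.add_sub_cancel]
  have hab : a' + 1 + (b' + 1) - 1 = a' + b' + 1 := by omega
  rw [hab]
  have h1 : (∫ w in (0:ℝ)..x, w ^ a' * (1 - w) ^ b') ≤ ∫ w in (0:ℝ)..x, w ^ a' := by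
    apply intervalIntegral.integral_mono_on hx0
    · apply Continuous.intervalIntegrable; continuity
    · apply Continuous.intervalIntegrable; continuity
    · intro w hw
      have hw0 : 0 ≤ w := hw.1
      have hw1 : w ≤ 1 := le_trans hw.2 hx1
      calc w ^ a' * (1 - w) ^ b' ≤ w ^ a' * 1 := by
            apply mul_le_mul_of_nonneg_left _ (pow_nonneg hw0 _)
            exact pow_le_one₀ (by linarith) (by linarith)
        _ = w ^ a' := mul_one _
  have h2 : (∫ w in (0:ℝ)..x, w ^ a') = x ^ (a' + 1) / (a' + 1) := by
    rw [integral_pow]; simp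
  have hfac : ((a' + b' + 1).factorial : ℝ)
      = ((a' + b' + 1).choose b' : ℝ) * (b'.factorial : ℝ) * ((a' + 1).factorial : ℝ) := by
    have := Nat.choose_mul_factorial_mul_factorial (show b' ≤ a' + b' + 1 by omega)
    have h3 : a' + b' + 1 - b' = a' + 1 := by omega
    rw [h3] at this
    exact_mod_cast this.symm
  have hnn : (0:ℝ) ≤ ((a' + b' + 1).factorial : ℝ) / ((a'.factorial : ℝ) * (b'.factorial : ℝ)) := by
    positivity
  calc ((a' + b' + 1).factorial : ℝ) / ((a'.factorial : ℝ) * (b'.factorial : ℝ)) *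
        ∫ w in (0:ℝ)..x, w ^ a' * (1 - w) ^ b'
      ≤ ((a' + b' + 1).factorial : ℝ) / ((a'.factorial : ℝ) * (b'.factorial : ℝ)) *
        (x ^ (a' + 1) / (a' + 1)) := by
        rw [← h2]; exact mul_le_mul_of_nonneg_left h1 hnn
    _ = ((a' + b' + 1).choose b' : ℝ) * x ^ (a' + 1) := by
        rw [hfac, Nat.factorial_succ]
        have h4 : (a'.factorial : ℝ) ≠ 0 := Nat.cast_ne_zero.2 a'.factorial_ne_zero
        have h5 : (b'.factorial : ℝ) ≠ 0 := Nat.cast_ne_zero.2 b'.factorial_ne_zero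
        have h6 : ((a':ℝ) + 1) ≠ 0 := by positivity
        push_cast
        field_simp
end

section
/- Let A ≥ 0, B > 0 and ρ ∈ [0,1] be real numbers. For λ ≥ 0 set λ₂ = ρλ/(1+λA) and define E₀(λ) = ρ·ln(1+λA) + ln(1+λ₂A) + ln( 1 − B·( ρλ − λ₂/(1+λ₂A) ) ), whenever 1 − B·(ρλ − λ₂/(1+λ₂A)) > 0. Then for every such λ ≥ 0, E₀(λ) ≤ ρ·ln( 1 + A/((1+ρ)·B) ), and equality holds at λ = 1/(B(1+ρ)). -/
private lemma key_ineq (A B ρ : ℝ) (hA : 0 ≤ A) (hB : 0 < B) (hρ0 : 0 ≤ ρ) (hρ1 : ρ ≤ 1)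
    (l : ℝ) (hl : 0 ≤ l)
    (hY : 0 < 1 - B * (ρ * l - (ρ * l / (1 + l * A)) / (1 + (ρ * l / (1 + l * A)) * A))) :
    ρ * Real.log (1 + l * A) + Real.log (1 + (ρ * l / (1 + l * A)) * A) +
        Real.log (1 - B * (ρ * l -
          (ρ * l / (1 + l * A)) / (1 + (ρ * l / (1 + l * A)) * A))) ≤
      ρ * Real.log (1 + A / ((1 + ρ) * B)) := by
  have hρ1' : (0:ℝ) < 1 + ρ := by linarith
  have hx : (0:ℝ) < 1 + l * A := by nlinarith [mul_nonneg hl hA]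
  have hl2 : 0 ≤ ρ * l / (1 + l * A) := div_nonneg (mul_nonneg hρ0 hl) hx.le
  have hX : (0:ℝ) < 1 + (ρ * l / (1 + l * A)) * A := by nlinarith [mul_nonneg hl2 hA]
  have hy : (0:ℝ) < 1 + A / ((1 + ρ) * B) := by
    have : 0 ≤ A / ((1 + ρ) * B) := div_nonneg hA (by positivity)
    linarith
  set X := 1 + (ρ * l / (1 + l * A)) * A with hXdef
  set Y := 1 - B * (ρ * l - (ρ * l / (1 + l * A)) / (1 + (ρ * l / (1 + l * A)) * A)) with hYdef
  have hNid : X * Y * (1 + l * A) = 1 + (1 + ρ) * l * A - B * ρ * (1 + ρ) * A * l ^ 2 := by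
    rw [hXdef, hYdef]
    field_simp
    ring
  set N := 1 + (1 + ρ) * l * A - B * ρ * (1 + ρ) * A * l ^ 2 with hNdef
  have hN : 0 < N := by rw [← hNid]; exact mul_pos (mul_pos hX hY) hx
  have hM : 0 < ρ * (1 + l * A) + (1 - ρ) * (1 + A / ((1 + ρ) * B)) := by
    rcases le_total (1 + l * A) (1 + A / ((1 + ρ) * B)) with h | h
    · nlinarith [mul_nonneg (show (0:ℝ) ≤ 1 - ρ by linarith) (sub_nonneg.2 h)]
    · nlinarith [mul_nonneg hρ0 (sub_nonneg.2 h)]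
  set M := ρ * (1 + l * A) + (1 - ρ) * (1 + A / ((1 + ρ) * B)) with hMdef
  have hNM : N * M ≤ (1 + l * A) * (1 + A / ((1 + ρ) * B)) := by
    have hkey : ((1 + l * A) * (1 + A / ((1 + ρ) * B)) - N * M) * ((1 + ρ) * B)
        = A * ρ * (1 + A * ρ * l) * (1 - B * l * (1 + ρ)) ^ 2 := by
      rw [hNdef, hMdef]
      field_simp
      ring
    nlinarith [mul_nonneg (mul_nonneg (mul_nonneg hA hρ0)
        (show (0:ℝ) ≤ 1 + A * ρ * l by nlinarith [mul_nonneg (mul_nonneg hA hρ0) hl]))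
        (sq_nonneg (1 - B * l * (1 + ρ))), mul_pos hρ1' hB]
  have hlogN : Real.log N ≤ Real.log (1 + l * A) + Real.log (1 + A / ((1 + ρ) * B))
      - Real.log M := by
    have h := Real.log_le_log (mul_pos hN hM) hNM
    rw [Real.log_mul hN.ne' hM.ne', Real.log_mul hx.ne' hy.ne'] at h
    linarith
  have hconc : ρ * Real.log (1 + l * A) + (1 - ρ) * Real.log (1 + A / ((1 + ρ) * B))
      ≤ Real.log M := by
    have h := (strictConcaveOn_log_Ioi.concaveOn).2 (Set.mem_Ioi.2 hx) (Set.mem_Ioi.2 hy)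
      hρ0 (by linarith : (0:ℝ) ≤ 1 - ρ) (by ring)
    simpa [smul_eq_mul, hMdef] using h
  have hXY : Real.log X + Real.log Y = Real.log N - Real.log (1 + l * A) := by
    have h : Real.log N = Real.log (X * Y) + Real.log (1 + l * A) := by
      rw [← hNid, Real.log_mul (mul_pos hX hY).ne' hx.ne']
    rw [Real.log_mul hX.ne' hY.ne'] at h
    linarith
  linarith

/-- Gallager-type exponent: for `A ≥ 0`, `B > 0`, `ρ ∈ [0,1]`, with
`λ₂ = ρλ/(1+λA)` and
`E₀(λ) = ρ·ln(1+λA) + ln(1+λ₂A) + ln(1 − B(ρλ − λ₂/(1+λ₂A)))`,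
one has `E₀(λ) ≤ ρ·ln(1 + A/((1+ρ)B))` for every `λ ≥ 0` with
`1 − B(ρλ − λ₂/(1+λ₂A)) > 0`, with equality at `λ = 1/(B(1+ρ))`. -/
theorem stmt_11 (A B ρ : ℝ) (hA : 0 ≤ A) (hB : 0 < B) (hρ0 : 0 ≤ ρ) (hρ1 : ρ ≤ 1) :
    (∀ l : ℝ, 0 ≤ l →
      0 < 1 - B * (ρ * l - (ρ * l / (1 + l * A)) / (1 + (ρ * l / (1 + l * A)) * A)) →
      ρ * Real.log (1 + l * A) + Real.log (1 + (ρ * l / (1 + l * A)) * A) +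
          Real.log (1 - B * (ρ * l -
            (ρ * l / (1 + l * A)) / (1 + (ρ * l / (1 + l * A)) * A))) ≤
        ρ * Real.log (1 + A / ((1 + ρ) * B))) ∧
    (ρ * Real.log (1 + (1 / (B * (1 + ρ))) * A) +
        Real.log (1 + (ρ * (1 / (B * (1 + ρ))) / (1 + (1 / (B * (1 + ρ))) * A)) * A) +
        Real.log (1 - B * (ρ * (1 / (B * (1 + ρ))) -
          (ρ * (1 / (B * (1 + ρ))) / (1 + (1 / (B * (1 + ρ))) * A)) /
            (1 + (ρ * (1 / (B * (1 + ρ))) / (1 + (1 / (B * (1 + ρ))) * A)) * A))) =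
      ρ * Real.log (1 + A / ((1 + ρ) * B))) := by
  have hρ1' : (0:ℝ) < 1 + ρ := by linarith
  constructor
  · exact fun l hl hY => key_ineq A B ρ hA hB hρ0 hρ1 l hl hY
  · set l : ℝ := 1 / (B * (1 + ρ)) with hldef
    have hl : 0 ≤ l := by positivity
    have hx : (0:ℝ) < 1 + l * A := by nlinarith [mul_nonneg hl hA]
    have hl2 : 0 ≤ ρ * l / (1 + l * A) := div_nonneg (mul_nonneg hρ0 hl) hx.le
    have hX : (0:ℝ) < 1 + (ρ * l / (1 + l * A)) * A := by nlinarith [mul_nonneg hl2 hA]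
    have h1 : (1 + (ρ * l / (1 + l * A)) * A) *
        (1 - B * (ρ * l - (ρ * l / (1 + l * A)) / (1 + (ρ * l / (1 + l * A)) * A))) = 1 := by
      rw [hldef]
      field_simp
      ring
    have hY : 0 < 1 - B * (ρ * l - (ρ * l / (1 + l * A)) / (1 + (ρ * l / (1 + l * A)) * A)) := by
      nlinarith [h1]
    have hlog : Real.log (1 + (ρ * l / (1 + l * A)) * A) +
        Real.log (1 - B * (ρ * l - (ρ * l / (1 + l * A)) / (1 + (ρ * l / (1 + l * A)) * A)))
        = 0 := by
      rw [← Real.log_mul hX.ne' hY.ne', h1, Real.log_one]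
    have harg : 1 + l * A = 1 + A / ((1 + ρ) * B) := by
      rw [hldef]; field_simp
    rw [harg] at hlog ⊢
    linarith [hlog]
end

section
/- Let d ≥ 1 be an integer, let μ ∈ ℝ^d, set λ = Σ_{i=1}^d μ_i², and let χ = Σ_{i=1}^d (g_i + μ_i)² where g₁,…,g_d are independent standard real Gaussian random variables. Then for every x > 0, ℙ( χ − (d + λ) ≥ x ) ≤ exp( −(1/2)·( x + d + 2λ − √(d+2λ)·√(2x + d + 2λ) ) ). -/
/-! Chernoff's method. For `c < 1/2`, completing the square gives
`𝔼 exp (c (g + m)²) = (1 - 2c)^(-1/2) exp (c m² / (1 - 2c))` for a standard Gaussian `g`, so by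
independence `χ` has moment generating function `(1 - 2s)^(-d/2) exp (s λ / (1 - 2s))`.
The elementary bound `log t ≤ (t - t⁻¹) / 2` for `t ≥ 1` turns the Chernoff bound into
`ℙ(χ - (d + λ) ≥ x) ≤ exp (-s x + (d + 2λ) s² / (1 - 2s))`, and the choice
`1 - 2s = √(d + 2λ) / √(2x + d + 2λ)` makes this exponent `-(√(2x + d + 2λ) - √(d + 2λ))² / 4`. -/

open MeasureTheory ProbabilityTheory Real

lemma log_le_sub_inv_div_two {t : ℝ} (ht : 1 ≤ t) : log t ≤ (t - t⁻¹) / 2 := by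
  let f : ℝ → ℝ := fun u => (u - u⁻¹) / 2 - log u
  have hf : ∀ u, 0 < u → HasDerivAt f ((u - 1) ^ 2 / (2 * u ^ 2)) u := by
    intro u hu
    refine ((((hasDerivAt_id u).sub (hasDerivAt_inv hu.ne')).div_const 2).sub
      (hasDerivAt_log hu.ne')).congr_deriv ?_
    field_simp
    ring
  have hmono : MonotoneOn f (Set.Ici 1) := by
    refine monotoneOn_of_hasDerivWithinAt_nonneg (convex_Ici 1)
      (fun u hu => (hf u (one_pos.trans_le hu)).continuousAt.continuousWithinAt)
      (fun u hu => (hf u (one_pos.trans (by simpa using hu))).hasDerivWithinAt)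
      (fun u _ => by positivity)
  simpa [f] using hmono Set.self_mem_Ici ht ht

lemma inv_sqrt_one_sub_two_mul_le_exp {s : ℝ} (hs0 : 0 ≤ s) (hs : s < 1 / 2) :
    (√(1 - 2 * s))⁻¹ ≤ exp (s + s ^ 2 / (1 - 2 * s)) := by
  have hc : 0 < 1 - 2 * s := by linarith
  have hlog := log_le_sub_inv_div_two ((one_le_inv₀ hc).mpr (by linarith))
  have hrhs : ((1 - 2 * s)⁻¹ - (1 - 2 * s)) / 2 = 2 * (s + s ^ 2 / (1 - 2 * s)) := by
    field_simp
    ring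
  rw [log_inv, inv_inv, hrhs] at hlog
  rw [← log_le_iff_le_exp (by positivity), log_inv, log_sqrt hc.le]
  linarith

lemma mgf_sq_add_gaussianReal (m : ℝ) {c : ℝ} (hc : c < 1 / 2) :
    mgf (fun y => (y + m) ^ 2) (gaussianReal 0 1) c
      = (√(1 - 2 * c))⁻¹ * exp (c * m ^ 2 / (1 - 2 * c)) := by
  have h2c : 0 < 1 - 2 * c := by linarith
  have hsquare : ∀ y, gaussianPDFReal 0 1 y • exp (c * (y + m) ^ 2)
      = ((√(2 * π))⁻¹ * exp (c * m ^ 2 / (1 - 2 * c)))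
        * exp (-((1 - 2 * c) / 2) * (y - 2 * c * m / (1 - 2 * c)) ^ 2) := by
    intro y
    rw [gaussianPDFReal, smul_eq_mul, mul_assoc, ← exp_add, mul_assoc _ (exp _), ← exp_add]
    congr 1
    · simp
    · congr 1
      push_cast
      field_simp
      ring
  rw [mgf, integral_gaussianReal_eq_integral_smul one_ne_zero]
  simp_rw [hsquare]
  rw [integral_const_mul, integral_sub_right_eq_self (fun y => exp (-((1 - 2 * c) / 2) * y ^ 2)),
    integral_gaussian, div_div_eq_mul_div, sqrt_div' _ h2c.le]
  field_simp

section Gaussian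

variable {Ω ι : Type*} [MeasurableSpace Ω] {P : Measure Ω}

lemma mgf_sq_add_of_map_eq_gaussianReal {X : Ω → ℝ} (hX : P.map X = gaussianReal 0 1)
    (m : ℝ) {c : ℝ} (hc : c < 1 / 2) :
    mgf (fun ω => (X ω + m) ^ 2) P c = (√(1 - 2 * c))⁻¹ * exp (c * m ^ 2 / (1 - 2 * c)) := by
  have hXm : AEMeasurable X P := aemeasurable_of_map_neZero (by rw [hX]; infer_instance)
  rw [← mgf_sq_add_gaussianReal m hc, ← hX, mgf_map hXm (by fun_prop)]
  rfl

variable [Fintype ι] {g : ι → Ω → ℝ}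

lemma mgf_sum_sq_add (hindep : iIndepFun g P) (hg : ∀ i, P.map (g i) = gaussianReal 0 1)
    (μ : ι → ℝ) {s : ℝ} (hs : s < 1 / 2) :
    mgf (fun ω => ∑ i, (g i ω + μ i) ^ 2) P s
      = (√(1 - 2 * s))⁻¹ ^ Fintype.card ι * exp (s * (∑ i, μ i ^ 2) / (1 - 2 * s)) := by
  have hmeas : ∀ i, AEMeasurable (g i) P := fun i =>
    aemeasurable_of_map_neZero (by rw [hg i]; infer_instance)
  let X : ι → Ω → ℝ := fun i ω => (g i ω + μ i) ^ 2
  have hX : iIndepFun X P := hindep.comp (fun i y => (y + μ i) ^ 2) (fun i => by fun_prop)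
  have hsum : (fun ω => ∑ i, (g i ω + μ i) ^ 2) = ∑ i, X i := by
    ext ω
    simp [X]
  rw [hsum, hX.mgf_sum₀ (fun i => ((hmeas i).add_const _).pow_const 2),
    Finset.prod_congr rfl fun i _ => mgf_sq_add_of_map_eq_gaussianReal (hg i) (μ i) hs,
    Finset.prod_mul_distrib, Finset.prod_const, ← exp_sum, Finset.mul_sum, Finset.sum_div,
    Finset.card_univ]

theorem measureReal_sum_sq_add_sub_ge_le (hindep : iIndepFun g P)
    (hg : ∀ i, P.map (g i) = gaussianReal 0 1) (μ : ι → ℝ) (x : ℝ) {s : ℝ} (hs0 : 0 ≤ s)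
    (hs : s < 1 / 2) :
    P.real {ω | x ≤ ∑ i, (g i ω + μ i) ^ 2 - (Fintype.card ι + ∑ i, μ i ^ 2)}
      ≤ exp (-s * x + (Fintype.card ι + 2 * ∑ i, μ i ^ 2) * s ^ 2 / (1 - 2 * s)) := by
  have := hindep.isProbabilityMeasure
  have h2s : 0 < 1 - 2 * s := by linarith
  have hmgf := mgf_sum_sq_add hindep hg μ hs
  -- `mgf` is `0` on non-integrable exponentials, so its positive value gives integrability
  have hint : Integrable (fun ω => exp (s * ∑ i, (g i ω + μ i) ^ 2)) P := by
    rw [← mgf_pos_iff, hmgf]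
    have := sqrt_pos.mpr h2s
    positivity
  simp_rw [le_sub_iff_add_le]
  refine (measure_ge_le_exp_mul_mgf _ hs0 hint).trans ?_
  rw [hmgf]
  calc _ ≤ exp (-s * (x + (Fintype.card ι + ∑ i, μ i ^ 2)))
        * (exp (s + s ^ 2 / (1 - 2 * s)) ^ Fintype.card ι
          * exp (s * (∑ i, μ i ^ 2) / (1 - 2 * s))) := by
        gcongr
        exact inv_sqrt_one_sub_two_mul_le_exp hs0 hs
    _ = _ := by
        rw [← exp_nat_mul, ← exp_add, ← exp_add]
        congr 1
        linear_combination (s * ∑ i, μ i ^ 2) * mul_inv_cancel₀ h2s.ne'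

end Gaussian

lemma exists_chernoff_exponent_eq {a x : ℝ} (ha : 0 < a) (hx : 0 ≤ x) :
    ∃ s, 0 ≤ s ∧ s < 1 / 2 ∧
      -s * x + a * s ^ 2 / (1 - 2 * s) = -(1 / 2) * (x + a - √a * √(2 * x + a)) := by
  have hA : 0 < √a := sqrt_pos.mpr ha
  have hAB : √a ≤ √(2 * x + a) := sqrt_le_sqrt (by linarith)
  have hB : 0 < √(2 * x + a) := hA.trans_le hAB
  refine ⟨(1 - √a / √(2 * x + a)) / 2, ?_, ?_, ?_⟩
  · linarith [div_le_one_of_le₀ hAB hB.le]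
  · linarith [div_pos hA hB]
  · have hA2 := sq_sqrt ha.le
    have hB2 := sq_sqrt (show 0 ≤ 2 * x + a by linarith)
    generalize √a = A at *
    generalize √(2 * x + a) = B at *
    obtain rfl : x = (B ^ 2 - A ^ 2) / 2 := by linarith
    subst hA2
    field_simp [hA.ne', hB.ne']
    ring

theorem stmt_12_general (d : ℕ) (hd : 1 ≤ d) (μ : Fin d → ℝ) (lam : ℝ)
    (hlam : lam = ∑ i, μ i ^ 2)
    {Ω : Type*} [MeasureSpace Ω]
    (g : Fin d → Ω → ℝ)
    (hindep : iIndepFun g ℙ)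
    (hg : ∀ i, Measure.map (g i) ℙ = gaussianReal 0 1)
    (x : ℝ) (hx : 0 < x) :
    ℙ {ω | x ≤ (∑ i, (g i ω + μ i) ^ 2) - ((d : ℝ) + lam)} ≤
      ENNReal.ofReal (Real.exp (-(1 / 2) * (x + d + 2 * lam -
        Real.sqrt (d + 2 * lam) * Real.sqrt (2 * x + d + 2 * lam)))) := by
  have := hindep.isProbabilityMeasure
  have ha : 0 < (d : ℝ) + 2 * lam := by
    have : (1 : ℝ) ≤ d := by exact_mod_cast hd
    have : 0 ≤ lam := hlam ▸ Finset.sum_nonneg fun i _ => sq_nonneg (μ i)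
    linarith
  obtain ⟨s, hs0, hs, hexp⟩ := exists_chernoff_exponent_eq ha hx.le
  have htail := measureReal_sum_sq_add_sub_ge_le hindep hg μ x hs0 hs
  rw [Fintype.card_fin, ← hlam, hexp] at htail
  rw [← ofReal_measureReal]
  convert ENNReal.ofReal_le_ofReal htail using 4
  ring_nf

/-- Noncentral chi-squared upper tail: if `χ = Σᵢ (gᵢ + μᵢ)²` with `g₁,…,g_d`
independent standard Gaussians and `λ = Σᵢ μᵢ²`, then for every `x > 0`,
`ℙ(χ − (d+λ) ≥ x) ≤ exp(−(1/2)(x + d + 2λ − √(d+2λ)·√(2x+d+2λ)))`. -/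
theorem stmt_12 (d : ℕ) (hd : 1 ≤ d) (μ : Fin d → ℝ) (lam : ℝ)
    (hlam : lam = ∑ i, μ i ^ 2)
    {Ω : Type*} [MeasureSpace Ω] [IsProbabilityMeasure (ℙ : Measure Ω)]
    (g : Fin d → Ω → ℝ) (hmg : ∀ i, Measurable (g i))
    (hindep : iIndepFun g ℙ)
    (hg : ∀ i, Measure.map (g i) ℙ = gaussianReal 0 1)
    (x : ℝ) (hx : 0 < x) :
    ℙ {ω | x ≤ (∑ i, (g i ω + μ i) ^ 2) - ((d : ℝ) + lam)} ≤
      ENNReal.ofReal (Real.exp (-(1 / 2) * (x + d + 2 * lam -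
        Real.sqrt (d + 2 * lam) * Real.sqrt (2 * x + d + 2 * lam)))) :=
  stmt_12_general d hd μ lam hlam g hindep hg x hx
end

section
/- Let d ≥ 1 be an integer, let μ ∈ ℝ^d, set λ = Σ_{i=1}^d μ_i², and let χ = Σ_{i=1}^d (g_i + μ_i)² where g₁,…,g_d are independent standard real Gaussian random variables. Then for every real x with 0 ≤ x < d + λ, ℙ( χ ≤ x ) ≤ exp( −(d + λ − x)² / (4·(d + 2λ)) ). -/
/-
Chernoff's bound for the lower tail: for `s ≥ 0`, `ℙ(χ ≤ x) ≤ exp(s x) 𝔼 exp(-s χ)`, and the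
expectation factorises over the independent coordinates. A Gaussian integral gives
`𝔼 exp(-s (g + m)²) = (1 + 2s)^{-1/2} exp(-s m² / (1 + 2s))`, which `log (1 + u) ≥ u - u²/2`
bounds by `exp(-s (1 + m²) + s² (1 + 2m²))`. Summing the exponents gives
`s x - s (d + λ) + s² (d + 2λ)`, a quadratic in `s` whose minimum is the claimed exponent.
-/

open MeasureTheory ProbabilityTheory Real

lemma Real.sub_sq_div_two_le_log_one_add {u : ℝ} (hu : 0 ≤ u) : u - u ^ 2 / 2 ≤ log (1 + u) := by
  refine le_trans ?_ (le_log_one_add_of_nonneg hu)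
  rw [le_div_iff₀ (by linarith)]
  nlinarith [pow_nonneg hu 3]

lemma Real.inv_sqrt_one_add_two_mul_le_exp {s : ℝ} (hs : 0 ≤ s) :
    (√(1 + 2 * s))⁻¹ ≤ exp (-s + s ^ 2) := by
  have h : exp (s - s ^ 2) ≤ √(1 + 2 * s) := by
    rw [le_sqrt (exp_pos _).le (by positivity), ← exp_nat_mul, ← le_log_iff_exp_le (by positivity)]
    convert sub_sq_div_two_le_log_one_add (by positivity : 0 ≤ 2 * s) using 1
    push_cast; ring
  calc (√(1 + 2 * s))⁻¹ ≤ (exp (s - s ^ 2))⁻¹ := inv_anti₀ (exp_pos _) h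
    _ = exp (-s + s ^ 2) := by rw [← exp_neg, neg_sub, sub_eq_neg_add]

lemma integral_exp_neg_mul_sq_add_gaussianReal {s : ℝ} (hs : 0 < 1 + 2 * s) (m : ℝ) :
    ∫ y, exp (-s * (y + m) ^ 2) ∂gaussianReal 0 1
      = (√(1 + 2 * s))⁻¹ * exp (-s * m ^ 2 / (1 + 2 * s)) := by
  -- complete the square: `y² / 2 + s (y + m)² = a (y + c)² + s m² / (1 + 2 s)`
  set a := (1 + 2 * s) / 2
  set c := 2 * s * m / (1 + 2 * s)
  have hsq : ∀ y : ℝ, gaussianPDFReal 0 1 y • exp (-s * (y + m) ^ 2)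
      = ((√(2 * π))⁻¹ * exp (-s * m ^ 2 / (1 + 2 * s))) * exp (-a * (y + c) ^ 2) := by
    intro y
    simp only [gaussianPDFReal, NNReal.coe_one, mul_one, sub_zero, smul_eq_mul, mul_assoc,
      ← exp_add]
    congr 2
    simp only [a, c]
    field_simp
    ring
  rw [integral_gaussianReal_eq_integral_smul one_ne_zero]
  simp_rw [hsq]
  rw [integral_const_mul, integral_add_right_eq_self (fun y ↦ exp (-a * y ^ 2)), integral_gaussian,
    show π / a = 2 * π / (1 + 2 * s) by simp only [a]; field_simp, sqrt_div' _ hs.le]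
  field_simp

lemma Real.inv_sqrt_mul_exp_le {s : ℝ} (hs : 0 ≤ s) (m : ℝ) :
    (√(1 + 2 * s))⁻¹ * exp (-s * m ^ 2 / (1 + 2 * s))
      ≤ exp (-s * (1 + m ^ 2) + s ^ 2 * (1 + 2 * m ^ 2)) := by
  have hdiv : -s * m ^ 2 / (1 + 2 * s) ≤ -s * m ^ 2 + 2 * s ^ 2 * m ^ 2 := by
    rw [div_le_iff₀ (by positivity)]
    nlinarith [mul_nonneg (pow_nonneg hs 3) (sq_nonneg m)]
  calc (√(1 + 2 * s))⁻¹ * exp (-s * m ^ 2 / (1 + 2 * s))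
      ≤ exp (-s + s ^ 2) * exp (-s * m ^ 2 + 2 * s ^ 2 * m ^ 2) := by
        gcongr
        exact inv_sqrt_one_add_two_mul_le_exp hs
    _ = exp (-s * (1 + m ^ 2) + s ^ 2 * (1 + 2 * m ^ 2)) := by rw [← exp_add]; congr 1; ring

namespace ProbabilityTheory

variable {Ω : Type*} [MeasurableSpace Ω] {P : Measure Ω}

lemma integrable_exp_mul_of_nonpos_of_nonneg [IsFiniteMeasure P] {X : Ω → ℝ}
    (hX : AEMeasurable X P) (hX0 : ∀ ω, 0 ≤ X ω) {t : ℝ} (ht : t ≤ 0) :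
    Integrable (fun ω ↦ exp (t * X ω)) P := by
  refine (integrable_const 1).mono' (by fun_prop) (ae_of_all _ fun ω ↦ ?_)
  rw [norm_of_nonneg (exp_pos _).le, exp_le_one_iff]
  exact mul_nonpos_of_nonpos_of_nonneg ht (hX0 ω)

lemma mgf_neg_sq_add_of_map_eq_gaussianReal {Y : Ω → ℝ} (hY : AEMeasurable Y P)
    (hYg : P.map Y = gaussianReal 0 1) (m : ℝ) {s : ℝ} (hs : 0 < 1 + 2 * s) :
    mgf (fun ω ↦ (Y ω + m) ^ 2) P (-s)
      = (√(1 + 2 * s))⁻¹ * exp (-s * m ^ 2 / (1 + 2 * s)) := by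
  rw [mgf, ← integral_exp_neg_mul_sq_add_gaussianReal hs m, ← hYg,
    integral_map hY (by fun_prop)]

lemma mgf_neg_sum_sq_add_le {ι : Type*} [Fintype ι] {g : ι → Ω → ℝ} (hmg : ∀ i, Measurable (g i))
    (hindep : iIndepFun g P) (hg : ∀ i, P.map (g i) = gaussianReal 0 1) (μ : ι → ℝ)
    {s : ℝ} (hs : 0 ≤ s) :
    mgf (fun ω ↦ ∑ i, (g i ω + μ i) ^ 2) P (-s)
      ≤ exp (-s * (Fintype.card ι + ∑ i, μ i ^ 2) + s ^ 2 * (Fintype.card ι + 2 * ∑ i, μ i ^ 2)) := by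
  have hsum : (fun ω ↦ ∑ i, (g i ω + μ i) ^ 2) = ∑ i, fun ω ↦ (g i ω + μ i) ^ 2 := by
    ext ω; simp
  have hindep' : iIndepFun (fun i ω ↦ (g i ω + μ i) ^ 2) P :=
    hindep.comp (fun i y ↦ (y + μ i) ^ 2) (fun i ↦ by fun_prop)
  rw [hsum, hindep'.mgf_sum (fun i ↦ by fun_prop)]
  calc ∏ i, mgf (fun ω ↦ (g i ω + μ i) ^ 2) P (-s)
      ≤ ∏ i, exp (-s * (1 + μ i ^ 2) + s ^ 2 * (1 + 2 * μ i ^ 2)) := by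
        refine Finset.prod_le_prod (fun _ _ ↦ mgf_nonneg) fun i _ ↦ ?_
        rw [mgf_neg_sq_add_of_map_eq_gaussianReal (hmg i).aemeasurable (hg i) _ (by positivity)]
        exact inv_sqrt_mul_exp_le hs _
    _ = _ := by
        rw [← exp_sum]
        simp only [Finset.sum_add_distrib, mul_add, Finset.mul_sum, Finset.sum_const,
          Finset.card_univ, nsmul_eq_mul]
        ring_nf

end ProbabilityTheory

theorem stmt_13_general (d : ℕ) (μ : Fin d → ℝ) (lam : ℝ)
    (hlam : lam = ∑ i, μ i ^ 2)
    {Ω : Type*} [MeasureSpace Ω] [IsProbabilityMeasure (ℙ : Measure Ω)]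
    (g : Fin d → Ω → ℝ) (hmg : ∀ i, Measurable (g i))
    (hindep : iIndepFun g ℙ)
    (hg : ∀ i, Measure.map (g i) ℙ = gaussianReal 0 1)
    (x : ℝ) (hx : x < (d : ℝ) + lam) :
    ℙ {ω | (∑ i, (g i ω + μ i) ^ 2) ≤ x} ≤
      ENNReal.ofReal (Real.exp (-((d : ℝ) + lam - x) ^ 2 / (4 * ((d : ℝ) + 2 * lam)))) := by
  set A := (d : ℝ) + lam - x
  set B := (d : ℝ) + 2 * lam
  have hlam0 : 0 ≤ lam := hlam ▸ by positivity
  have hB : 0 ≤ B := by positivity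
  -- the Chernoff exponent `s x - s (d + λ) + s² B` is minimised at `s = A / (2 B)`
  set s := A / (2 * B)
  have hs : 0 ≤ s := div_nonneg (by linarith) (by positivity)
  have hopt : exp (s * x) * exp (-s * (d + lam) + s ^ 2 * B) = exp (-A ^ 2 / (4 * B)) := by
    rw [← exp_add]
    congr 1
    -- for `B = 0` both sides vanish, as then `s = 0` and `A ^ 2 / 0 = 0`
    rcases hB.eq_or_lt with hB0 | hBpos
    · simp [s, ← hB0]
    · simp only [s, A]
      field_simp
      ring
  have hchernoff := measure_le_le_exp_mul_mgf x (neg_nonpos.mpr hs)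
    (integrable_exp_mul_of_nonpos_of_nonneg (X := fun ω ↦ ∑ i, (g i ω + μ i) ^ 2) (P := ℙ)
      (by fun_prop) (fun ω ↦ by positivity) (neg_nonpos.mpr hs))
  have hmgf := mgf_neg_sum_sq_add_le hmg hindep hg μ hs
  rw [Fintype.card_fin, ← hlam] at hmgf
  rw [← ofReal_measureReal]
  refine ENNReal.ofReal_le_ofReal (hchernoff.trans ?_)
  rw [← hopt, neg_neg]
  gcongr

/-- Noncentral chi-squared lower tail: if `χ = Σᵢ (gᵢ + μᵢ)²` with `g₁,…,g_d`
independent standard Gaussians and `λ = Σᵢ μᵢ²`, then for every `0 ≤ x < d + λ`,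
`ℙ(χ ≤ x) ≤ exp(−(d+λ−x)²/(4(d+2λ)))`. -/
theorem stmt_13 (d : ℕ) (hd : 1 ≤ d) (μ : Fin d → ℝ) (lam : ℝ)
    (hlam : lam = ∑ i, μ i ^ 2)
    {Ω : Type*} [MeasureSpace Ω] [IsProbabilityMeasure (ℙ : Measure Ω)]
    (g : Fin d → Ω → ℝ) (hmg : ∀ i, Measurable (g i))
    (hindep : iIndepFun g ℙ)
    (hg : ∀ i, Measure.map (g i) ℙ = gaussianReal 0 1)
    (x : ℝ) (hx0 : 0 ≤ x) (hx : x < (d : ℝ) + lam) :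
    ℙ {ω | (∑ i, (g i ω + μ i) ^ 2) ≤ x} ≤
      ENNReal.ofReal (Real.exp (-((d : ℝ) + lam - x) ^ 2 / (4 * ((d : ℝ) + 2 * lam)))) :=
  stmt_13_general d μ lam hlam g hmg hindep hg x hx
end
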